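/- Under the hypotheses of the local energy balance for the Kirchhoff limit system — μ > 0, a > 0, P = diag(1,1,2/a); continuously differentiable fields r̆, v, ω, n, κ : [0,1] × ℝ → ℝ³ (with continuous partial derivatives on [0,1] × ℝ); τ̊ : [0,1] → ℝ³; orthogonal-matrix-valued D; V : ℝ³ → ℝ continuously differentiable; satisfying D·∂_t r̆ = v, 0 = ∂_s v + κ×v + τ̊×ω, ∂_tκ = ∂_sω + κ×ω, ∂_t v = ∂_s n + κ×n + v×ω + D·(−∇V(r̆)), 0 = ∂_s m + κ×m + τ̊×n with m = μ⁻²P·κ — assume in addition the cantilever boundary conditions v(0,t) = 0, ω(0,t) = 0, n(1,t) = 0 and κ(1,t) = 0 for all t. Then the total energy E(t) := ∫₀¹ [½‖v(s,t)‖² + (2μ²)⁻¹ κ(s,t)·(P·κ(s,t)) + V(r̆(s,t))] ds is constant in t. -/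

import Mathlib

/-!
Along the rod the energy density `w⁰ = ½ v·v + (2μ²)⁻¹ κ·Pκ + V(r̆)` satisfies the local balance
`∂ₜ w⁰ = ∂ₛ (v·n + ω·m)`: substituting the equations of motion into `∂ₜ w⁰`, the gyroscopic term
`v·(v × ω)` vanishes, the potential power `∇V·∂ₜ r̆` cancels against `v·D(−∇V)` because `D` is
orthogonal, and the remaining cross terms cancel in pairs by antisymmetry of the triple product.
Integrating over `s ∈ [0,1]` and then over `t ∈ [t₁,t₂]` (Fubini), the change of the total energy
is the time integral of the boundary flux `[v·n + ω·m]₀¹`, which the cantilever conditions kill.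
-/

open Matrix

noncomputable section

/-- Cross product on `ℝ³`. -/
def cross3 (a b : Fin 3 → ℝ) : Fin 3 → ℝ :=
  ![a 1 * b 2 - a 2 * b 1, a 2 * b 0 - a 0 * b 2, a 0 * b 1 - a 1 * b 0]

/-- Partial derivative with respect to the time variable `t` (second component). -/
def pt {E : Type*} [NormedAddCommGroup E] [NormedSpace ℝ E]
    (f : ℝ × ℝ → E) (p : ℝ × ℝ) : E :=
  deriv (fun t => f (p.1, t)) p.2

/-- Partial derivative with respect to the space variable `s` (first component). -/
def ps {E : Type*} [NormedAddCommGroup E] [NormedSpace ℝ E]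
    (f : ℝ × ℝ → E) (p : ℝ × ℝ) : E :=
  deriv (fun s => f (s, p.2)) p.1

/-- Coordinate gradient of a scalar function on `ℝ³`. -/
def grad3 (V : (Fin 3 → ℝ) → ℝ) (x : Fin 3 → ℝ) : Fin 3 → ℝ :=
  fun i => fderiv ℝ V x (Pi.single i 1)

open MeasureTheory Set
open scoped Interval

section PartialDerivatives

variable {E : Type*} [NormedAddCommGroup E] [NormedSpace ℝ E] {f : ℝ × ℝ → E} {p : ℝ × ℝ}

theorem DifferentiableAt.hasDerivAt_pt (hf : DifferentiableAt ℝ f p) :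
    HasDerivAt (fun t => f (p.1, t)) (pt f p) p.2 :=
  (hf.hasFDerivAt.comp_hasDerivAt p.2
    ((hasDerivAt_const _ _).prodMk (hasDerivAt_id _))).differentiableAt.hasDerivAt

theorem DifferentiableAt.hasDerivAt_slice_fst (hf : DifferentiableAt ℝ f p) :
    HasDerivAt (fun s => f (s, p.2)) (fderiv ℝ f p (1, 0)) p.1 :=
  hf.hasFDerivAt.comp_hasDerivAt p.1 ((hasDerivAt_id _).prodMk (hasDerivAt_const _ _))

theorem DifferentiableAt.hasDerivAt_ps (hf : DifferentiableAt ℝ f p) :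
    HasDerivAt (fun s => f (s, p.2)) (ps f p) p.1 :=
  hf.hasDerivAt_slice_fst.differentiableAt.hasDerivAt

theorem ContDiff.continuous_ps (hf : ContDiff ℝ 1 f) : Continuous (ps f) := by
  have hps : ps f = fun p => fderiv ℝ f p (1, 0) :=
    funext fun p => (hf.differentiable one_ne_zero p).hasDerivAt_slice_fst.deriv
  rw [hps]
  exact (hf.continuous_fderiv one_ne_zero).clm_apply continuous_const

end PartialDerivatives

theorem HasDerivAt.dotProduct {ι : Type*} [Fintype ι] {f g : ℝ → ι → ℝ} {f' g' : ι → ℝ} {x : ℝ}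
    (hf : HasDerivAt f f' x) (hg : HasDerivAt g g' x) :
    HasDerivAt (fun t => f t ⬝ᵥ g t) (f' ⬝ᵥ g x + f x ⬝ᵥ g') x := by
  have h : HasDerivAt (fun t => ∑ i, f t i * g t i) (∑ i, (f' i * g x i + f x i * g' i)) x :=
    HasDerivAt.fun_sum fun i _ => (hasDerivAt_pi.mp hf i).mul (hasDerivAt_pi.mp hg i)
  simpa only [_root_.dotProduct, Finset.sum_add_distrib] using h

theorem HasDerivAt.matrix_mulVec {m n : Type*} [Fintype m] [Fintype n] {f : ℝ → n → ℝ}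
    {f' : n → ℝ} {x : ℝ} (A : Matrix m n ℝ) (hf : HasDerivAt f f' x) :
    HasDerivAt (fun t => A *ᵥ f t) (A *ᵥ f') x := by
  exact A.mulVecLin.toContinuousLinearMap.hasFDerivAt.comp_hasDerivAt x hf

theorem hasDerivAt_pt_energyDensity {ι : Type*} [Fintype ι] {r v κ : ℝ × ℝ → ι → ℝ}
    {V : (ι → ℝ) → ℝ} {p : ℝ × ℝ} (K : Matrix ι ι ℝ) (c : ℝ) (hr : DifferentiableAt ℝ r p)
    (hv : DifferentiableAt ℝ v p) (hκ : DifferentiableAt ℝ κ p)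
    (hV : DifferentiableAt ℝ V (r p)) :
    HasDerivAt
      (fun t => 1 / 2 * (v (p.1, t) ⬝ᵥ v (p.1, t)) + c * (κ (p.1, t) ⬝ᵥ K *ᵥ κ (p.1, t))
        + V (r (p.1, t)))
      (1 / 2 * (pt v p ⬝ᵥ v p + v p ⬝ᵥ pt v p) + c * (pt κ p ⬝ᵥ K *ᵥ κ p + κ p ⬝ᵥ K *ᵥ pt κ p)
        + fderiv ℝ V (r p) (pt r p)) p.2 :=
  (((hv.hasDerivAt_pt.dotProduct hv.hasDerivAt_pt).const_mul _).add
    ((hκ.hasDerivAt_pt.dotProduct (hκ.hasDerivAt_pt.matrix_mulVec K)).const_mul _)).add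
    (hV.hasFDerivAt.comp_hasDerivAt p.2 hr.hasDerivAt_pt)

theorem intervalIntegral_intervalIntegral_swap {E : Type*} [NormedAddCommGroup E]
    [NormedSpace ℝ E] [CompleteSpace E] {f : ℝ × ℝ → E} (hf : Continuous f) (a b c d : ℝ) :
    ∫ s in a..b, ∫ t in c..d, f (s, t) = ∫ t in c..d, ∫ s in a..b, f (s, t) := by
  have hint : IntegrableOn f (Ι a b ×ˢ Ι c d) :=
    (hf.continuousOn.integrableOn_compact (isCompact_uIcc.prod isCompact_uIcc)).mono_set
      (prod_mono uIoc_subset_uIcc uIoc_subset_uIcc)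
  simp only [intervalIntegral.intervalIntegral_eq_integral_uIoc, integral_smul]
  rw [integral_integral_swap (by rwa [Measure.prod_restrict]), smul_comm]

theorem intervalIntegral_slice_eq_of_conservation_law {W G w : ℝ × ℝ → ℝ} {a b : ℝ}
    (hW : Continuous W) (hw : Continuous w)
    (hWt : ∀ p : ℝ × ℝ, p.1 ∈ [[a, b]] → HasDerivAt (fun t => W (p.1, t)) (w p) p.2)
    (hGs : ∀ p : ℝ × ℝ, p.1 ∈ [[a, b]] → HasDerivAt (fun s => G (s, p.2)) (w p) p.1)
    (hG : ∀ t, G (a, t) = G (b, t)) (t₁ t₂ : ℝ) :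
    ∫ s in a..b, W (s, t₁) = ∫ s in a..b, W (s, t₂) := by
  have hslice (s : ℝ) (hs : s ∈ [[a, b]]) :
      W (s, t₂) - W (s, t₁) = ∫ t in t₁..t₂, w (s, t) :=
    (intervalIntegral.integral_eq_sub_of_hasDerivAt (f := fun t => W (s, t))
      (fun t _ => hWt (s, t) hs)
      ((by fun_prop : Continuous fun t => w (s, t)).intervalIntegrable _ _)).symm
  have hflux (t : ℝ) : ∫ s in a..b, w (s, t) = 0 := by
    rw [intervalIntegral.integral_eq_sub_of_hasDerivAt (f := fun s => G (s, t))
      (fun s hs => hGs (s, t) hs)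
      ((by fun_prop : Continuous fun s => w (s, t)).intervalIntegrable _ _), hG, sub_self]
  have hW_int (t : ℝ) : IntervalIntegrable (fun s => W (s, t)) volume a b :=
    (by fun_prop : Continuous fun s => W (s, t)).intervalIntegrable _ _
  have hincrement : ∫ s in a..b, (W (s, t₂) - W (s, t₁)) = 0 := by
    rw [intervalIntegral.integral_congr hslice, intervalIntegral_intervalIntegral_swap hw]
    simp [hflux]
  rw [intervalIntegral.integral_sub (hW_int t₂) (hW_int t₁), sub_eq_zero] at hincrement
  exact hincrement.symm

theorem fderiv_apply_eq_grad3_dotProduct (V : (Fin 3 → ℝ) → ℝ) (x y : Fin 3 → ℝ) :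
    fderiv ℝ V x y = grad3 V x ⬝ᵥ y := by
  rw [← ContinuousLinearMap.coe_coe, LinearMap.pi_apply_eq_sum_univ, dotProduct]
  refine Finset.sum_congr rfl fun i _ => ?_
  have hsingle : (fun j => if i = j then (1 : ℝ) else 0) = Pi.single i 1 := by
    ext j
    simp [Pi.single_apply, eq_comm]
  rw [smul_eq_mul, mul_comm, grad3, hsingle, ContinuousLinearMap.coe_coe]

theorem dotProduct_mulVec_mulVec_of_mul_transpose_eq_one {n : Type*} [Fintype n] [DecidableEq n]
    {D : Matrix n n ℝ} (hD : D * Dᵀ = 1) (x y : n → ℝ) : D *ᵥ x ⬝ᵥ D *ᵥ y = x ⬝ᵥ y := by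
  rw [dotProduct_mulVec, ← mulVec_transpose, mulVec_mulVec, mul_eq_one_comm.mp hD, one_mulVec]

theorem cross3_eq_crossProduct (a b : Fin 3 → ℝ) : cross3 a b = a ⨯₃ b :=
  (cross_apply a b).symm

theorem crossProduct_dotProduct {R : Type*} [CommRing R] (a b c : Fin 3 → R) :
    a ⨯₃ b ⬝ᵥ c = -(b ⬝ᵥ a ⨯₃ c) := by
  rw [dotProduct_comm, triple_product_permutation, ← cross_anticomm, dotProduct_neg,
    triple_product_permutation b, triple_product_permutation a]

theorem kirchhoff_local_energy_balance {K : Matrix (Fin 3) (Fin 3) ℝ} (hK : Kᵀ = K) (c : ℝ)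
    {v ω n κ τ f vt κt vs ωs ns ms : Fin 3 → ℝ}
    (hconstr : 0 = vs + cross3 κ v + cross3 τ ω)
    (hcompat : κt = ωs + cross3 κ ω)
    (hlin : vt = ns + cross3 κ n + cross3 v ω + f)
    (hang : 0 = ms + cross3 κ (c • K *ᵥ κ) + cross3 τ n) :
    1 / 2 * (vt ⬝ᵥ v + v ⬝ᵥ vt) + c / 2 * (κt ⬝ᵥ K *ᵥ κ + κ ⬝ᵥ K *ᵥ κt) - v ⬝ᵥ f
      = (vs ⬝ᵥ n + v ⬝ᵥ ns) + (ωs ⬝ᵥ c • K *ᵥ κ + ω ⬝ᵥ ms) := by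
  set m := c • K *ᵥ κ
  simp only [cross3_eq_crossProduct] at hconstr hcompat hlin hang
  have hvs : vs = -(κ ⨯₃ v) - τ ⨯₃ ω := by linear_combination -hconstr
  have hms : ms = -(κ ⨯₃ m) - τ ⨯₃ n := by linear_combination -hang
  have helastic : c / 2 * (κt ⬝ᵥ K *ᵥ κ + κ ⬝ᵥ K *ᵥ κt) = κt ⬝ᵥ m := by
    rw [dotProduct_mulVec κ, ← mulVec_transpose, hK, dotProduct_comm _ κt, dotProduct_smul,
      smul_eq_mul]
    ring
  rw [helastic, dotProduct_comm vt v, hlin, hcompat, hvs, hms]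
  simp only [dotProduct_add, add_dotProduct, sub_dotProduct, dotProduct_sub, neg_dotProduct,
    dotProduct_neg, dot_self_cross, crossProduct_dotProduct]
  ring

theorem kirchhoff_energy_conservation_cantilever_general
    (μ a : ℝ)
    (r v ω n κ : ℝ × ℝ → Fin 3 → ℝ)
    (hr : ContDiff ℝ 1 r) (hv : ContDiff ℝ 1 v) (hω : ContDiff ℝ 1 ω)
    (hn : ContDiff ℝ 1 n) (hκ : ContDiff ℝ 1 κ)
    (τ0 : ℝ → Fin 3 → ℝ)
    (D : ℝ × ℝ → Matrix (Fin 3) (Fin 3) ℝ)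
    (hD : ∀ p : ℝ × ℝ, D p * (D p)ᵀ = 1)
    (V : (Fin 3 → ℝ) → ℝ) (hV : ContDiff ℝ 1 V)
    (hkin : ∀ p : ℝ × ℝ, p.1 ∈ Set.Icc (0:ℝ) 1 → (D p).mulVec (pt r p) = v p)
    (hconstr : ∀ p : ℝ × ℝ, p.1 ∈ Set.Icc (0:ℝ) 1 →
      (0 : Fin 3 → ℝ) = ps v p + cross3 (κ p) (v p) + cross3 (τ0 p.1) (ω p))
    (hcompat : ∀ p : ℝ × ℝ, p.1 ∈ Set.Icc (0:ℝ) 1 →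
      pt κ p = ps ω p + cross3 (κ p) (ω p))
    (hlin : ∀ p : ℝ × ℝ, p.1 ∈ Set.Icc (0:ℝ) 1 →
      pt v p = ps n p + cross3 (κ p) (n p) + cross3 (v p) (ω p)
        + (D p).mulVec (-(grad3 V (r p))))
    (hang : ∀ p : ℝ × ℝ, p.1 ∈ Set.Icc (0:ℝ) 1 →
      (0 : Fin 3 → ℝ)
        = ps (fun q => (μ ^ 2)⁻¹ • (Matrix.diagonal ![1, 1, 2 / a]).mulVec (κ q)) p
          + cross3 (κ p) ((μ ^ 2)⁻¹ • (Matrix.diagonal ![1, 1, 2 / a]).mulVec (κ p))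
          + cross3 (τ0 p.1) (n p))
    (hbc : ∀ t : ℝ, v (0, t) = 0 ∧ ω (0, t) = 0 ∧ n (1, t) = 0 ∧ κ (1, t) = 0) :
    ∀ t₁ t₂ : ℝ,
      (∫ s in (0:ℝ)..1, ((1 / 2) * (v (s, t₁) ⬝ᵥ v (s, t₁))
          + (2 * μ ^ 2)⁻¹ * (κ (s, t₁) ⬝ᵥ (Matrix.diagonal ![1, 1, 2 / a]).mulVec (κ (s, t₁)))
          + V (r (s, t₁))))
        = ∫ s in (0:ℝ)..1, ((1 / 2) * (v (s, t₂) ⬝ᵥ v (s, t₂))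
          + (2 * μ ^ 2)⁻¹ * (κ (s, t₂) ⬝ᵥ (Matrix.diagonal ![1, 1, 2 / a]).mulVec (κ (s, t₂)))
          + V (r (s, t₂))) := by
  intro t₁ t₂
  set P : Matrix (Fin 3) (Fin 3) ℝ := diagonal ![1, 1, 2 / a]
  set m : ℝ × ℝ → Fin 3 → ℝ := fun q => (μ ^ 2)⁻¹ • P *ᵥ κ q
  have hm : ContDiff ℝ 1 m :=
    (P.mulVecLin.toContinuousLinearMap.contDiff.comp hκ).const_smul _
  have hd {f : ℝ × ℝ → Fin 3 → ℝ} (hf : ContDiff ℝ 1 f) (p : ℝ × ℝ) : DifferentiableAt ℝ f p :=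
    hf.differentiable one_ne_zero p
  refine intervalIntegral_slice_eq_of_conservation_law
    (W := fun p => 1 / 2 * (v p ⬝ᵥ v p) + (2 * μ ^ 2)⁻¹ * (κ p ⬝ᵥ P *ᵥ κ p) + V (r p))
    (G := fun p => v p ⬝ᵥ n p + ω p ⬝ᵥ m p)
    (w := fun p => (ps v p ⬝ᵥ n p + v p ⬝ᵥ ps n p) + (ps ω p ⬝ᵥ m p + ω p ⬝ᵥ ps m p))
    ?_ ?_ ?_ ?_ ?_ t₁ t₂
  · fun_prop
  · have := hv.continuous_ps; have := hn.continuous_ps; have := hω.continuous_ps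
    have := hm.continuous_ps
    fun_prop
  · intro p hp
    rw [uIcc_of_le zero_le_one] at hp
    refine (hasDerivAt_pt_energyDensity P _ (hd hr p) (hd hv p) (hd hκ p)
      (hV.differentiable one_ne_zero _)).congr_deriv ?_
    have hforce : fderiv ℝ V (r p) (pt r p) = -(v p ⬝ᵥ D p *ᵥ -grad3 V (r p)) := by
      rw [← hkin p hp, dotProduct_mulVec_mulVec_of_mul_transpose_eq_one (hD p),
        fderiv_apply_eq_grad3_dotProduct, dotProduct_neg, neg_neg, dotProduct_comm]
    rw [hforce, ← sub_eq_add_neg, show (2 * μ ^ 2)⁻¹ = (μ ^ 2)⁻¹ / 2 by ring]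
    exact kirchhoff_local_energy_balance (diagonal_transpose _) _ (hconstr p hp) (hcompat p hp)
      (hlin p hp) (hang p hp)
  · exact fun p _ => ((hd hv p).hasDerivAt_ps.dotProduct (hd hn p).hasDerivAt_ps).add
      ((hd hω p).hasDerivAt_ps.dotProduct (hd hm p).hasDerivAt_ps)
  · intro t
    simp [m, hbc]

/-- energy conservation of the Kirchhoff limit system for a cantilever
beam: under the limit system on `[0,1] × ℝ` with boundary conditions `v(0,t) = 0`,
`ω(0,t) = 0`, `n(1,t) = 0`, `κ(1,t) = 0`, the total energy
`E(t) = ∫₀¹ [½‖v‖² + (2μ²)⁻¹κ·(P·κ) + V(r̆)] ds` is constant in `t`. -/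
theorem kirchhoff_energy_conservation_cantilever
    (μ a : ℝ) (hμ : 0 < μ) (ha : 0 < a)
    (r v ω n κ : ℝ × ℝ → Fin 3 → ℝ)
    (hr : ContDiff ℝ 1 r) (hv : ContDiff ℝ 1 v) (hω : ContDiff ℝ 1 ω)
    (hn : ContDiff ℝ 1 n) (hκ : ContDiff ℝ 1 κ)
    (τ0 : ℝ → Fin 3 → ℝ)
    (D : ℝ × ℝ → Matrix (Fin 3) (Fin 3) ℝ)
    (hD : ∀ p : ℝ × ℝ, D p * (D p)ᵀ = 1)
    (V : (Fin 3 → ℝ) → ℝ) (hV : ContDiff ℝ 1 V)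
    (hkin : ∀ p : ℝ × ℝ, p.1 ∈ Set.Icc (0:ℝ) 1 → (D p).mulVec (pt r p) = v p)
    (hconstr : ∀ p : ℝ × ℝ, p.1 ∈ Set.Icc (0:ℝ) 1 →
      (0 : Fin 3 → ℝ) = ps v p + cross3 (κ p) (v p) + cross3 (τ0 p.1) (ω p))
    (hcompat : ∀ p : ℝ × ℝ, p.1 ∈ Set.Icc (0:ℝ) 1 →
      pt κ p = ps ω p + cross3 (κ p) (ω p))
    (hlin : ∀ p : ℝ × ℝ, p.1 ∈ Set.Icc (0:ℝ) 1 →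
      pt v p = ps n p + cross3 (κ p) (n p) + cross3 (v p) (ω p)
        + (D p).mulVec (-(grad3 V (r p))))
    (hang : ∀ p : ℝ × ℝ, p.1 ∈ Set.Icc (0:ℝ) 1 →
      (0 : Fin 3 → ℝ)
        = ps (fun q => (μ ^ 2)⁻¹ • (Matrix.diagonal ![1, 1, 2 / a]).mulVec (κ q)) p
          + cross3 (κ p) ((μ ^ 2)⁻¹ • (Matrix.diagonal ![1, 1, 2 / a]).mulVec (κ p))
          + cross3 (τ0 p.1) (n p))
    (hbc : ∀ t : ℝ, v (0, t) = 0 ∧ ω (0, t) = 0 ∧ n (1, t) = 0 ∧ κ (1, t) = 0) :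
    ∀ t₁ t₂ : ℝ,
      (∫ s in (0:ℝ)..1, ((1 / 2) * (v (s, t₁) ⬝ᵥ v (s, t₁))
          + (2 * μ ^ 2)⁻¹ * (κ (s, t₁) ⬝ᵥ (Matrix.diagonal ![1, 1, 2 / a]).mulVec (κ (s, t₁)))
          + V (r (s, t₁))))
        = ∫ s in (0:ℝ)..1, ((1 / 2) * (v (s, t₂) ⬝ᵥ v (s, t₂))
          + (2 * μ ^ 2)⁻¹ * (κ (s, t₂) ⬝ᵥ (Matrix.diagonal ![1, 1, 2 / a]).mulVec (κ (s, t₂)))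
          + V (r (s, t₂))) :=
  kirchhoff_energy_conservation_cantilever_general μ a r v ω n κ hr hv hω hn hκ τ0 D hD V hV hkin
    hconstr hcompat hlin hang hbc
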